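/- Let (A_N, B_N, C_N), N = 1, 2, …, be random vectors in ℝ^p × ℝ^m × ℝ^k converging in distribution to (A, B, C), and suppose that A is independent of (B, C). Let φ_N, φ : ℝ^m × ℝ^k → {0, 1} be Borel-measurable functions such that, for almost every point (b, c) under the law of (B, C), φ_N(b_N, c_N) → φ(b, c) for every sequence (b_N, c_N) → (b, c), and suppose P(φ(B, C) = 1) > 0. Then the conditional distribution of A_N given the event {φ_N(B_N, C_N) = 1} converges weakly to the unconditional distribution of A. -/

import Mathlib

/-!
STATEMENT 14: If the limit A is independent of the balance statistics (B, C), then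
the conditional law of A_N given acceptance by the converging balance criteria φ_N
converges weakly to the unconditional law of A (asymptotic distribution unaffected
by rerandomization). Independence of A and (B, C) is encoded as the joint limit law
being the product of its marginals.
-/

open MeasureTheory ProbabilityTheory Matrix Filter
open scoped NNReal Topology ENNReal

noncomputable section

/-- Weak convergence of a sequence of measures: integrals of every bounded continuous
real-valued function converge. -/
def TendstoWeakly {E : Type*} [MeasurableSpace E] [TopologicalSpace E]
    (μs : ℕ → Measure E) (μ : Measure E) : Prop :=
  ∀ f : BoundedContinuousFunction E ℝ,
    Tendsto (fun N => ∫ x, f x ∂(μs N)) atTop (𝓝 (∫ x, f x ∂μ))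

/-!
Under conditioning on `E N = {φs N = 1}`, the integral of `f (A_N)` is
`((μs N).real (E N))⁻¹ * ∫ z in E N, f z.1 ∂μs N`, so it suffices that these set integrals
converge to those over `F = {φ = 1}`. The hypothesis on `φs` says that almost every point `z` has
a ball on which, eventually in `N`, membership in `E N` agrees with membership of `z` in `F`.
The closed sets `eventualCore E j` of points whose `1 / (j + 1)`-ball lies in `E N` for all
`N ≥ j` exhaust `F` up to a null set, and a thickened indicator of them gives a bounded continuous
minorant of `f · 1_{E N}`; this yields `liminf ∫_{E N} f ≥ ∫_F f` for `f ≥ 0`. The same bound for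
the complements, together with `∫ f ∂μs N → ∫ f ∂μ`, forces convergence. Finally, independence
makes the first marginal of `μ` conditioned on an event of `(B, C)` equal to that of `μ`.
-/

open Metric
open scoped BoundedContinuousFunction

section EventualCore

variable {Z : Type*} [PseudoMetricSpace Z]

/-- Points whose `1 / (j + 1)`-ball lies in `E N` for every `N ≥ j`. -/
def eventualCore (E : ℕ → Set Z) (j : ℕ) : Set Z :=
  ⋂ N ≥ j, (thickening (1 / ((j : ℝ) + 1)) (E N)ᶜ)ᶜ

theorem isClosed_eventualCore (E : ℕ → Set Z) (j : ℕ) : IsClosed (eventualCore E j) :=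
  isClosed_biInter fun _ _ => isOpen_thickening.isClosed_compl

theorem eventualCore_mono (E : ℕ → Set Z) : Monotone (eventualCore E) := by
  intro j j' hjj' z hz
  refine Set.mem_iInter₂.2 fun N hN hzN => ?_
  refine Set.mem_iInter₂.1 hz N (hjj'.trans hN) ?_
  exact thickening_mono (Nat.one_div_le_one_div hjj') _ hzN

theorem thickening_eventualCore_subset (E : ℕ → Set Z) {j N : ℕ} (hjN : j ≤ N) :
    thickening (1 / ((j : ℝ) + 1)) (eventualCore E j) ⊆ E N := by
  intro z hz
  obtain ⟨w, hw, hwz⟩ := mem_thickening_iff.1 hz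
  by_contra hzN
  exact Set.mem_iInter₂.1 hw N hjN
    (mem_thickening_iff.2 ⟨z, hzN, by rwa [dist_comm]⟩)

theorem exists_mem_eventualCore {E : ℕ → Set Z} {z : Z} {ε : ℝ} (hε : 0 < ε)
    (h : ∀ᶠ N in atTop, ball z ε ⊆ E N) : ∃ j, z ∈ eventualCore E j := by
  obtain ⟨M, hM⟩ := eventually_atTop.1 h
  obtain ⟨n, hn⟩ := exists_nat_one_div_lt hε
  refine ⟨max M n, Set.mem_iInter₂.2 fun N hN hz => ?_⟩
  obtain ⟨w, hw, hzw⟩ := mem_thickening_iff.1 hz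
  refine hw (hM N ((le_max_left M n).trans hN) (mem_ball.2 ?_))
  rw [dist_comm]
  calc dist z w < 1 / ((max M n : ℕ) + 1 : ℝ) := hzw
    _ ≤ 1 / ((n : ℝ) + 1) := Nat.one_div_le_one_div (le_max_right M n)
    _ < ε := hn

end EventualCore

theorem tendsto_extend_of_strictMono {X : Type*} [TopologicalSpace X] {θ : ℕ → ℕ}
    (hθ : StrictMono θ) {b : ℕ → X} {y : X} (hb : Tendsto b atTop (𝓝 y)) :
    Tendsto (Function.extend θ b fun _ => y) atTop (𝓝 y) := by
  refine tendsto_nhds.2 fun U hU hyU => ?_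
  obtain ⟨J, hJ⟩ := eventually_atTop.1 (hb (hU.mem_nhds hyU))
  filter_upwards [eventually_ge_atTop (θ J)] with N hN
  by_cases hN' : ∃ j, θ j = N
  · obtain ⟨j, rfl⟩ := hN'
    rw [Set.mem_preimage, hθ.injective.extend_apply]
    exact hJ j (hθ.le_iff_le.1 hN)
  · rwa [Set.mem_preimage, Function.extend_apply' _ _ _ hN']

theorem exists_pos_eventually_forall_ball_mem {Y β : Type*} [PseudoMetricSpace Y]
    [TopologicalSpace β] {F : ℕ → Y → β} {y : Y} {L : β}
    (h : ∀ ys : ℕ → Y, Tendsto ys atTop (𝓝 y) → Tendsto (fun N => F N (ys N)) atTop (𝓝 L))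
    {U : Set β} (hU : U ∈ 𝓝 L) : ∃ ε > 0, ∀ᶠ N in atTop, ∀ w ∈ ball y ε, F N w ∈ U := by
  by_contra! hbad
  obtain ⟨θ, hθ, hθbad⟩ := extraction_forall_of_frequently fun j : ℕ =>
    hbad (1 / ((j : ℝ) + 1)) Nat.one_div_pos_of_nat
  choose b hb hbU using hθbad
  have hb_lim : Tendsto b atTop (𝓝 y) :=
    tendsto_iff_dist_tendsto_zero.2 <| squeeze_zero (fun _ => dist_nonneg)
      (fun j => (mem_ball.1 (hb j)).le) tendsto_one_div_add_atTop_nhds_zero_nat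
  obtain ⟨j, hj⟩ :=
    (((h _ (tendsto_extend_of_strictMono hθ hb_lim)).comp hθ.tendsto_atTop).eventually hU).exists
  simp only [Function.comp_apply, hθ.injective.extend_apply] at hj
  exact hbU j hj

theorem exists_pos_eventually_forall_ball_eq_of_zero_or_one {Y : Type*} [PseudoMetricSpace Y]
    {F : ℕ → Y → ℝ} {y : Y} {L : ℝ} (hF : ∀ N w, F N w = 0 ∨ F N w = 1) (hL : L = 0 ∨ L = 1)
    (h : ∀ ys : ℕ → Y, Tendsto ys atTop (𝓝 y) → Tendsto (fun N => F N (ys N)) atTop (𝓝 L)) :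
    ∃ ε > 0, ∀ᶠ N in atTop, ∀ w ∈ ball y ε, F N w = L := by
  obtain ⟨ε, hε, hball⟩ := exists_pos_eventually_forall_ball_mem h (ball_mem_nhds L one_pos)
  refine ⟨ε, hε, hball.mono fun N hN w hw => ?_⟩
  have hclose := mem_ball.1 (hN w hw)
  rcases hF N w with hFw | hFw <;> rcases hL with rfl | rfl <;>
    simp [hFw, Real.dist_eq] at hclose ⊢

theorem tendsto_of_eventually_lt_of_tendsto_add {ι : Type*} {l : Filter ι} {u v : ι → ℝ}
    {a b : ℝ} (hu : ∀ a' < a, ∀ᶠ i in l, a' < u i) (hv : ∀ b' < b, ∀ᶠ i in l, b' < v i)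
    (huv : Tendsto (fun i => u i + v i) l (𝓝 (a + b))) : Tendsto u l (𝓝 a) := by
  refine tendsto_order.2 ⟨hu, fun a' ha' => ?_⟩
  have hε : 0 < (a' - a) / 2 := by linarith
  filter_upwards [hv _ (sub_lt_self b hε),
    huv.eventually (gt_mem_nhds (lt_add_of_pos_right (a + b) hε))] with i hvi huvi
  linarith

section WeakConvergence

variable {Z : Type*} [PseudoMetricSpace Z] [MeasurableSpace Z] [OpensMeasurableSpace Z]
  {μs : ℕ → Measure Z} {μ : Measure Z} [∀ N, IsFiniteMeasure (μs N)] [IsFiniteMeasure μ]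
  {E : ℕ → Set Z} {F : Set Z}

theorem TendstoWeakly.eventually_lt_setIntegral (hconv : TendstoWeakly μs μ)
    (hE : ∀ N, MeasurableSet (E N)) (hF : MeasurableSet F)
    (hcore : ∀ᵐ z ∂μ, z ∈ F → ∃ ε > 0, ∀ᶠ N in atTop, ball z ε ⊆ E N)
    {f : Z →ᵇ ℝ} (hf : 0 ≤ f) {a : ℝ} (ha : a < ∫ z in F, f z ∂μ) :
    ∀ᶠ N in atTop, a < ∫ z in E N, f z ∂μs N := by
  set K := eventualCore E
  have hFK : ∀ j, MeasurableSet (F ∩ K j) := fun j =>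
    hF.inter (isClosed_eventualCore E j).measurableSet
  have hF_ae : ⋃ j, F ∩ K j =ᵐ[μ] F := by
    refine eventuallyEq_set.2 ?_
    filter_upwards [hcore] with z hz
    simp only [Set.mem_iUnion, Set.mem_inter_iff, exists_and_left, and_iff_left_iff_imp]
    intro hzF
    obtain ⟨ε, hε, hball⟩ := hz hzF
    exact exists_mem_eventualCore hε hball
  have hlim : Tendsto (fun j => ∫ z in F ∩ K j, f z ∂μ) atTop (𝓝 (∫ z in F, f z ∂μ)) := by
    rw [← setIntegral_congr_set hF_ae]
    exact tendsto_setIntegral_of_monotone hFK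
      (fun i j hij => Set.inter_subset_inter_right F (eventualCore_mono E hij))
      (f.integrable μ).integrableOn
  obtain ⟨j, hj⟩ := (hlim.eventually_const_lt ha).exists
  set δ : ℝ := 1 / ((j : ℝ) + 1)
  have hδ : 0 < δ := Nat.one_div_pos_of_nat
  -- `f · 1_{K j} ≤ g ≤ f · 1_{E N}` for `N ≥ j`, as the `δ`-thickening of `K j` lies in `E N`
  set t : Z →ᵇ ℝ := (thickenedIndicator hδ (K j)).comp _ NNReal.isometry_coe.lipschitz
  set g : Z →ᵇ ℝ := f * t
  have ht : ∀ z, 0 ≤ t z ∧ t z ≤ 1 := fun z =>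
    ⟨NNReal.coe_nonneg _, NNReal.coe_le_one.2 (thickenedIndicator_le_one hδ _ z)⟩
  have hg_ge : ∫ z in F ∩ K j, f z ∂μ ≤ ∫ z, g z ∂μ := by
    rw [← integral_indicator (hFK j)]
    refine integral_mono ((f.integrable μ).indicator (hFK j)) (g.integrable μ) fun z => ?_
    by_cases hz : z ∈ F ∩ K j
    · simp [Set.indicator_of_mem hz, g, t, thickenedIndicator_one hδ _ hz.2]
    · rw [Set.indicator_of_notMem hz]
      exact mul_nonneg (hf z) (ht z).1
  have hg_le : ∀ N ≥ j, ∫ z, g z ∂μs N ≤ ∫ z in E N, f z ∂μs N := by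
    intro N hN
    rw [← integral_indicator (hE N)]
    refine integral_mono (g.integrable _) ((f.integrable _).indicator (hE N)) fun z => ?_
    by_cases hz : z ∈ E N
    · rw [Set.indicator_of_mem hz]
      exact mul_le_of_le_one_right (hf z) (ht z).2
    · have hzK : z ∉ thickening δ (K j) := fun h => hz (thickening_eventualCore_subset E hN h)
      simp [Set.indicator_of_notMem hz, g, t, thickenedIndicator_zero hδ _ hzK]
  filter_upwards [(hconv g).eventually_const_lt (hj.trans_le hg_ge), eventually_ge_atTop j]
    with N hN hjN
  exact hN.trans_le (hg_le N hjN)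

theorem TendstoWeakly.tendsto_setIntegral_of_nonneg (hconv : TendstoWeakly μs μ)
    (hE : ∀ N, MeasurableSet (E N)) (hF : MeasurableSet F)
    (hbd : ∀ᵐ z ∂μ, ∃ ε > 0, ∀ᶠ N in atTop, ∀ w ∈ ball z ε, (w ∈ E N ↔ z ∈ F))
    {f : Z →ᵇ ℝ} (hf : 0 ≤ f) :
    Tendsto (fun N => ∫ z in E N, f z ∂μs N) atTop (𝓝 (∫ z in F, f z ∂μ)) := by
  refine tendsto_of_eventually_lt_of_tendsto_add (v := fun N => ∫ z in (E N)ᶜ, f z ∂μs N)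
    (fun a ha => hconv.eventually_lt_setIntegral hE hF ?_ hf ha)
    (fun b hb => hconv.eventually_lt_setIntegral (fun N => (hE N).compl) hF.compl ?_ hf hb) ?_
  · filter_upwards [hbd] with z ⟨ε, hε, hball⟩ hzF
    exact ⟨ε, hε, hball.mono fun N hN w hw => (hN w hw).2 hzF⟩
  · filter_upwards [hbd] with z ⟨ε, hε, hball⟩ hzF
    exact ⟨ε, hε, hball.mono fun N hN w hw => (not_congr (hN w hw)).2 hzF⟩
  · simp only [integral_add_compl (hE _) (f.integrable _), integral_add_compl hF (f.integrable _)]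
    exact hconv f

theorem TendstoWeakly.tendsto_setIntegral (hconv : TendstoWeakly μs μ)
    (hE : ∀ N, MeasurableSet (E N)) (hF : MeasurableSet F)
    (hbd : ∀ᵐ z ∂μ, ∃ ε > 0, ∀ᶠ N in atTop, ∀ w ∈ ball z ε, (w ∈ E N ↔ z ∈ F))
    (f : Z →ᵇ ℝ) :
    Tendsto (fun N => ∫ z in E N, f z ∂μs N) atTop (𝓝 (∫ z in F, f z ∂μ)) := by
  set c : Z →ᵇ ℝ := BoundedContinuousFunction.const Z ‖f‖
  have hc : 0 ≤ c := fun _ => norm_nonneg f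
  have hfc : 0 ≤ f + c := fun z => neg_le_iff_add_nonneg.1 (f.neg_norm_le_apply z)
  have hshift : ∀ (ν : Measure Z) [IsFiniteMeasure ν] (s : Set Z),
      ∫ z in s, (f + c) z ∂ν - ∫ z in s, c z ∂ν = ∫ z in s, f z ∂ν := fun ν _ s => by
    simp only [BoundedContinuousFunction.coe_add, Pi.add_apply]
    rw [integral_add (f.integrable _).integrableOn (c.integrable _).integrableOn,
      add_sub_cancel_right]
  simpa only [hshift] using (hconv.tendsto_setIntegral_of_nonneg hE hF hbd hfc).sub
    (hconv.tendsto_setIntegral_of_nonneg hE hF hbd hc)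

theorem integral_cond_eq_inv_mul_setIntegral {α : Type*} [MeasurableSpace α] (ν : Measure α)
    (s : Set α) (f : α → ℝ) : ∫ x, f x ∂ν[|s] = (ν.real s)⁻¹ * ∫ x in s, f x ∂ν := by
  rw [ProbabilityTheory.cond, integral_smul_measure, ENNReal.toReal_inv, smul_eq_mul]
  rfl

theorem TendstoWeakly.cond (hconv : TendstoWeakly μs μ)
    (hE : ∀ N, MeasurableSet (E N)) (hF : MeasurableSet F)
    (hbd : ∀ᵐ z ∂μ, ∃ ε > 0, ∀ᶠ N in atTop, ∀ w ∈ ball z ε, (w ∈ E N ↔ z ∈ F))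
    (hF0 : μ F ≠ 0) : TendstoWeakly (fun N => (μs N)[|E N]) (μ[|F]) := by
  have hmass : Tendsto (fun N => (μs N).real (E N)) atTop (𝓝 (μ.real F)) := by
    simpa using hconv.tendsto_setIntegral hE hF hbd 1
  have hF0' : μ.real F ≠ 0 := ENNReal.toReal_ne_zero.2 ⟨hF0, measure_ne_top μ F⟩
  intro f
  simp only [integral_cond_eq_inv_mul_setIntegral]
  exact (hmass.inv₀ hF0').mul (hconv.tendsto_setIntegral hE hF hbd f)

end WeakConvergence

theorem TendstoWeakly.map {X Y : Type*} [MeasurableSpace X] [TopologicalSpace X]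
    [OpensMeasurableSpace X] [MeasurableSpace Y] [TopologicalSpace Y] [BorelSpace Y]
    {μs : ℕ → Measure X} {μ : Measure X} (hconv : TendstoWeakly μs μ) {g : X → Y}
    (hg : Continuous g) : TendstoWeakly (fun N => (μs N).map g) (μ.map g) := by
  intro f
  simp only [integral_map hg.aemeasurable f.continuous.aestronglyMeasurable]
  exact hconv (f.compContinuous ⟨g, hg⟩)

theorem map_fst_cond_prod_snd_preimage {α β : Type*} [MeasurableSpace α] [MeasurableSpace β]
    (ν₁ : Measure α) [IsProbabilityMeasure ν₁] (ν₂ : Measure β) [SFinite ν₂] {t : Set β}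
    (ht : MeasurableSet t) (ht0 : ν₂ t ≠ 0) (htop : ν₂ t ≠ ∞) :
    ((ν₁.prod ν₂)[|Prod.snd ⁻¹' t]).map Prod.fst = ν₁ := by
  ext s hs
  rw [Measure.map_apply measurable_fst hs, cond_apply (measurable_snd ht), Set.inter_comm,
    ← Set.prod_eq, ← Set.univ_prod, Measure.prod_prod, Measure.prod_prod, measure_univ, one_mul,
    mul_comm, mul_assoc, ENNReal.mul_inv_cancel ht0 htop, mul_one]

theorem rerandomization_no_effect_when_independent
    {p m k : ℕ}
    (μs : ℕ → Measure ((Fin p → ℝ) × (Fin m → ℝ) × (Fin k → ℝ)))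
    (μ : Measure ((Fin p → ℝ) × (Fin m → ℝ) × (Fin k → ℝ)))
    (hμs : ∀ N, IsProbabilityMeasure (μs N)) (hμ : IsProbabilityMeasure μ)
    (hconv : TendstoWeakly μs μ)
    -- A is independent of (B, C) under the limit law
    (hindep : μ = (μ.map Prod.fst).prod (μ.map Prod.snd))
    (φs : ℕ → (Fin m → ℝ) × (Fin k → ℝ) → ℝ) (φ : (Fin m → ℝ) × (Fin k → ℝ) → ℝ)
    (hφs_meas : ∀ N, Measurable (φs N)) (hφ_meas : Measurable φ)
    (hφs01 : ∀ N y, φs N y = 0 ∨ φs N y = 1) (hφ01 : ∀ y, φ y = 0 ∨ φ y = 1)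
    (hcont : ∀ᵐ y ∂(μ.map (fun x => (x.2.1, x.2.2))),
      ∀ ys : ℕ → (Fin m → ℝ) × (Fin k → ℝ), Tendsto ys atTop (𝓝 y) →
        Tendsto (fun N => φs N (ys N)) atTop (𝓝 (φ y)))
    (hpos : 0 < μ {x | φ (x.2.1, x.2.2) = 1}) :
    TendstoWeakly
      (fun N => ((μs N)[|{x | φs N (x.2.1, x.2.2) = 1}]).map Prod.fst)
      (μ.map Prod.fst) := by
  have := hμs
  have := hμ
  have hsnd : Measurable fun x : (Fin p → ℝ) × (Fin m → ℝ) × (Fin k → ℝ) => (x.2.1, x.2.2) :=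
    measurable_snd
  have hE : ∀ N, MeasurableSet {x : (Fin p → ℝ) × (Fin m → ℝ) × (Fin k → ℝ) |
      φs N (x.2.1, x.2.2) = 1} := fun N => hsnd (hφs_meas N (measurableSet_singleton 1))
  have hT : MeasurableSet {y | φ y = 1} := hφ_meas (measurableSet_singleton 1)
  have hF : MeasurableSet {x : (Fin p → ℝ) × (Fin m → ℝ) × (Fin k → ℝ) |
      φ (x.2.1, x.2.2) = 1} := hsnd hT
  have hbd : ∀ᵐ z ∂μ, ∃ ε > 0, ∀ᶠ N in atTop, ∀ w ∈ ball z ε,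
      (w ∈ {x | φs N (x.2.1, x.2.2) = 1} ↔ z ∈ {x | φ (x.2.1, x.2.2) = 1}) := by
    filter_upwards [ae_of_ae_map hsnd.aemeasurable hcont] with z hz
    obtain ⟨ε, hε, hball⟩ := exists_pos_eventually_forall_ball_eq_of_zero_or_one hφs01 (hφ01 z.2) hz
    refine ⟨ε, hε, hball.mono fun N hN w hw => ?_⟩
    show φs N w.2 = 1 ↔ φ z.2 = 1
    rw [hN w.2 ((le_max_right (dist w.1 z.1) _).trans_lt hw)]
  have hmarg : (μ[|{x | φ (x.2.1, x.2.2) = 1}]).map Prod.fst = μ.map Prod.fst := by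
    have : IsProbabilityMeasure (μ.map Prod.fst) :=
      Measure.isProbabilityMeasure_map measurable_fst.aemeasurable
    conv_lhs => rw [hindep]
    exact map_fst_cond_prod_snd_preimage _ _ hT
      (by rw [Measure.map_apply measurable_snd hT]; exact hpos.ne') (measure_ne_top _ _)
  simpa only [hmarg] using (hconv.cond hE hF hbd hpos.ne').map continuous_fst
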